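/- For the homogeneous norm ρ on the Heisenberg group, the sub-Laplacian satisfies Δ_H ρ = (Q-1)/ρ · Ψ(η) at every η ≠ 0, where Q = 2N+2 and Ψ(η) = (|x|²+|y|²)/ρ². -/

import Mathlib

open scoped BigOperators
open MeasureTheory

noncomputable section

/-- Points of the Heisenberg group: `(x, y, τ) ∈ ℝ^N × ℝ^N × ℝ`. -/
abbrev H (N : ℕ) := (Fin N → ℝ) × (Fin N → ℝ) × ℝ

/-- The vector field `X_i = ∂_{x_i} + 2 y_i ∂_τ` as a direction at `η`. -/
def XVec {N : ℕ} (i : Fin N) (η : H N) : H N := (Pi.single i 1, 0, 2 * η.2.1 i)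

/-- The vector field `Y_i = ∂_{y_i} - 2 x_i ∂_τ` as a direction at `η`. -/
def YVec {N : ℕ} (i : Fin N) (η : H N) : H N := (0, Pi.single i 1, -(2 * η.1 i))

/-- Derivative of `f` along `X_i`. -/
def Xder {N : ℕ} (i : Fin N) (f : H N → ℝ) (η : H N) : ℝ := fderiv ℝ f η (XVec i η)

/-- Derivative of `f` along `Y_i`. -/
def Yder {N : ℕ} (i : Fin N) (f : H N → ℝ) (η : H N) : ℝ := fderiv ℝ f η (YVec i η)

/-- The sub-Laplacian `Δ_H f = Σ_i (X_i² + Y_i²) f`. -/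
def subLap {N : ℕ} (f : H N → ℝ) (η : H N) : ℝ :=
  ∑ i, (Xder i (Xder i f) η + Yder i (Yder i f) η)

/-- Squared norm of the horizontal gradient `|∇_H f|²`. -/
def hGradSq {N : ℕ} (f : H N → ℝ) (η : H N) : ℝ :=
  ∑ i, ((Xder i f η) ^ 2 + (Yder i f η) ^ 2)

/-- Euclidean squared norm on `ℝ^N`. -/
def sqnorm {N : ℕ} (x : Fin N → ℝ) : ℝ := ∑ i, (x i) ^ 2

/-- The homogeneous norm `|η|_H = ((|x|²+|y|²)² + τ²)^{1/4}`. -/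
def hnorm {N : ℕ} (η : H N) : ℝ :=
  ((sqnorm η.1 + sqnorm η.2.1) ^ 2 + η.2.2 ^ 2) ^ ((1 : ℝ) / 4)

/-- The Heisenberg group law: `heisMul η' η = (x+x', y+y', τ+τ' + 2(x⬝y' - x'⬝y))`. -/
def heisMul {N : ℕ} (a b : H N) : H N :=
  (a.1 + b.1, a.2.1 + b.2.1,
    a.2.2 + b.2.2 + 2 * ((∑ i, b.1 i * a.2.1 i) - (∑ i, a.1 i * b.2.1 i)))

/-- The dilation `δ_λ(x,y,τ) = (λx, λy, λ²τ)`. -/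
def dil {N : ℕ} (l : ℝ) (η : H N) : H N := (l • η.1, l • η.2.1, l ^ 2 * η.2.2)

end

/-! Write `ρ = u ^ (1/4)` with `u = q² + τ²` and `q = |x|² + |y|²`. For `f` of class `C²` the
chain rule gives `Δ_H (φ ∘ f) = φ''(f) |∇_H f|² + φ'(f) Δ_H f`. For `u` itself,
`X_i u = 4 (q x_i + τ y_i)` and `Y_i u = 4 (q y_i - τ x_i)`: this pair is `(x_i, y_i)` rotated
and scaled by `(q, τ)`, so `|∇_H u|² = 16 u q`, while `Δ_H u = 8 (N + 2) q`. With
`φ(t) = t ^ (1/4)` this gives `Δ_H ρ = (2 (N + 2) - 3) q u ^ (-3/4) = (Q - 1) q / ρ³`. -/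

open Filter Topology

theorem rpow_mul_neg_natCast {u : ℝ} (hu : 0 ≤ u) (a : ℝ) (n : ℕ) :
    u ^ (a * -n) = ((u ^ a) ^ n)⁻¹ := by
  rw [Real.rpow_mul hu, Real.rpow_neg (Real.rpow_nonneg hu a), Real.rpow_natCast]

section DirectionalChainRule

variable {E : Type*} [NormedAddCommGroup E] [NormedSpace ℝ E]

theorem fderiv_comp_apply_eq_mul {φ : ℝ → ℝ} {φ' : ℝ} {f : E → ℝ} {x : E}
    (hφ : HasDerivAt φ φ' (f x)) (hf : DifferentiableAt ℝ f x) (v : E) :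
    fderiv ℝ (φ ∘ f) x v = φ' * fderiv ℝ f x v := by
  rw [(hφ.comp_hasFDerivAt x hf.hasFDerivAt).fderiv]
  simp

theorem fderiv_fderiv_comp_apply {φ φ' : ℝ → ℝ} {φ'' : ℝ} {f : E → ℝ} {V : E → E}
    {x : E}
    (hφ : ∀ᶠ t in 𝓝 (f x), HasDerivAt φ (φ' t) t) (hφ' : HasDerivAt φ' φ'' (f x))
    (hf : ∀ᶠ y in 𝓝 x, DifferentiableAt ℝ f y)
    (hfV : DifferentiableAt ℝ (fun y => fderiv ℝ f y (V y)) x) :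
    fderiv ℝ (fun y => fderiv ℝ (φ ∘ f) y (V y)) x (V x) =
      φ'' * fderiv ℝ f x (V x) ^ 2 +
        φ' (f x) * fderiv ℝ (fun y => fderiv ℝ f y (V y)) x (V x) := by
  have hfx : DifferentiableAt ℝ f x := hf.self_of_nhds
  have hchain : (fun y => fderiv ℝ (φ ∘ f) y (V y)) =ᶠ[𝓝 x]
      fun y => φ' (f y) * fderiv ℝ f y (V y) := by
    filter_upwards [hf, hfx.continuousAt.tendsto.eventually hφ] with y hfy hφy
    exact fderiv_comp_apply_eq_mul hφy hfy (V y)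
  have hprod := (hφ'.comp_hasFDerivAt x hfx.hasFDerivAt).fun_mul hfV.hasFDerivAt
  simp only [Function.comp_apply] at hprod
  rw [hchain.fderiv_eq, hprod.fderiv]
  simp only [add_apply, smul_apply, smul_eq_mul]
  ring

end DirectionalChainRule

section HeisenbergCalculus

variable {N : ℕ}

theorem fderiv_fst_apply (j : Fin N) (η v : H N) :
    fderiv ℝ (fun ζ : H N => ζ.1 j) η v = v.1 j := by
  simp (disch := fun_prop) [fderiv_apply, fderiv.fst]

theorem fderiv_snd_fst_apply (j : Fin N) (η v : H N) :
    fderiv ℝ (fun ζ : H N => ζ.2.1 j) η v = v.2.1 j := by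
  simp (disch := fun_prop) [fderiv_apply, fderiv.fst, fderiv.snd]

theorem fderiv_snd_snd_apply (η v : H N) : fderiv ℝ (fun ζ : H N => ζ.2.2) η v = v.2.2 := by
  simp (disch := fun_prop) [fderiv.snd]

theorem differentiable_fderiv_apply_XVec {f : H N → ℝ} (hf : ContDiff ℝ 2 f) (i : Fin N) :
    Differentiable ℝ fun η => fderiv ℝ f η (XVec i η) :=
  (hf.fderiv_right (m := 1) le_rfl).differentiable one_ne_zero |>.clm_apply
    (by unfold XVec; fun_prop)

theorem differentiable_fderiv_apply_YVec {f : H N → ℝ} (hf : ContDiff ℝ 2 f) (i : Fin N) :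
    Differentiable ℝ fun η => fderiv ℝ f η (YVec i η) :=
  (hf.fderiv_right (m := 1) le_rfl).differentiable one_ne_zero |>.clm_apply
    (by unfold YVec; fun_prop)

theorem Xder_Xder_comp {φ φ' : ℝ → ℝ} {φ'' : ℝ} {f : H N → ℝ} {η : H N}
    (hf : ContDiff ℝ 2 f) (hφ : ∀ᶠ t in 𝓝 (f η), HasDerivAt φ (φ' t) t)
    (hφ' : HasDerivAt φ' φ'' (f η)) (i : Fin N) :
    Xder i (Xder i (φ ∘ f)) η = φ'' * Xder i f η ^ 2 + φ' (f η) * Xder i (Xder i f) η :=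
  fderiv_fderiv_comp_apply hφ hφ' (.of_forall (hf.differentiable two_ne_zero))
    (differentiable_fderiv_apply_XVec hf i η)

theorem Yder_Yder_comp {φ φ' : ℝ → ℝ} {φ'' : ℝ} {f : H N → ℝ} {η : H N}
    (hf : ContDiff ℝ 2 f) (hφ : ∀ᶠ t in 𝓝 (f η), HasDerivAt φ (φ' t) t)
    (hφ' : HasDerivAt φ' φ'' (f η)) (i : Fin N) :
    Yder i (Yder i (φ ∘ f)) η = φ'' * Yder i f η ^ 2 + φ' (f η) * Yder i (Yder i f) η :=
  fderiv_fderiv_comp_apply hφ hφ' (.of_forall (hf.differentiable two_ne_zero))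
    (differentiable_fderiv_apply_YVec hf i η)

theorem subLap_comp {φ φ' : ℝ → ℝ} {φ'' : ℝ} {f : H N → ℝ} {η : H N}
    (hf : ContDiff ℝ 2 f) (hφ : ∀ᶠ t in 𝓝 (f η), HasDerivAt φ (φ' t) t)
    (hφ' : HasDerivAt φ' φ'' (f η)) :
    subLap (φ ∘ f) η = φ'' * hGradSq f η + φ' (f η) * subLap f η := by
  simp only [subLap, hGradSq, Xder_Xder_comp hf hφ hφ', Yder_Yder_comp hf hφ hφ',
    Finset.mul_sum, ← Finset.sum_add_distrib]
  exact Finset.sum_congr rfl fun i _ => by ring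

end HeisenbergCalculus

section HomogeneousNorm

variable {N : ℕ}

def horizSqNorm (η : H N) : ℝ := sqnorm η.1 + sqnorm η.2.1

def hnormQuartic (η : H N) : ℝ := horizSqNorm η ^ 2 + η.2.2 ^ 2

theorem sqnorm_nonneg (x : Fin N → ℝ) : 0 ≤ sqnorm x :=
  Finset.sum_nonneg fun i _ => sq_nonneg (x i)

theorem sqnorm_eq_zero {x : Fin N → ℝ} : sqnorm x = 0 ↔ x = 0 := by
  rw [← dotProduct_self_eq_zero, sqnorm, dotProduct]
  simp only [sq]

theorem hnormQuartic_pos {η : H N} (hη : η ≠ 0) : 0 < hnormQuartic η := by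
  contrapose! hη
  have hu : horizSqNorm η ^ 2 + η.2.2 ^ 2 = 0 :=
    le_antisymm hη (add_nonneg (sq_nonneg _) (sq_nonneg _))
  obtain ⟨hq, hτ⟩ := (add_eq_zero_iff_of_nonneg (sq_nonneg _) (sq_nonneg _)).1 hu
  obtain ⟨hx, hy⟩ := (add_eq_zero_iff_of_nonneg (sqnorm_nonneg _) (sqnorm_nonneg _)).1
    (pow_eq_zero_iff two_ne_zero |>.1 hq)
  exact Prod.ext (sqnorm_eq_zero.1 hx)
    (Prod.ext (sqnorm_eq_zero.1 hy) (pow_eq_zero_iff two_ne_zero |>.1 hτ))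

theorem contDiff_horizSqNorm : ContDiff ℝ 2 (horizSqNorm (N := N)) := by
  unfold horizSqNorm sqnorm; fun_prop

theorem contDiff_hnormQuartic : ContDiff ℝ 2 (hnormQuartic (N := N)) := by
  unfold hnormQuartic; exact (contDiff_horizSqNorm.pow 2).add (by fun_prop)

theorem fderiv_horizSqNorm_apply (η v : H N) :
    fderiv ℝ horizSqNorm η v = 2 * (∑ j, η.1 j * v.1 j + ∑ j, η.2.1 j * v.2.1 j) := by
  unfold horizSqNorm sqnorm
  simp (disch := fun_prop) only [fderiv_fun_add, fderiv_fun_sum, fderiv_fun_pow, add_apply,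
    sum_apply, smul_apply, smul_eq_mul, nsmul_eq_mul, fderiv_fst_apply, fderiv_snd_fst_apply]
  simp only [mul_add, Finset.mul_sum]
  ring_nf

theorem fderiv_hnormQuartic_apply (η v : H N) :
    fderiv ℝ hnormQuartic η v =
      2 * horizSqNorm η * fderiv ℝ horizSqNorm η v + 2 * η.2.2 * v.2.2 := by
  have hq := contDiff_horizSqNorm.differentiable two_ne_zero η
  unfold hnormQuartic
  simp (disch := fun_prop) only [fderiv_fun_add, fderiv_fun_pow, add_apply, smul_apply,
    smul_eq_mul, nsmul_eq_mul, fderiv_snd_snd_apply]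
  ring

theorem Xder_horizSqNorm (i : Fin N) (η : H N) : Xder i horizSqNorm η = 2 * η.1 i := by
  simp [Xder, XVec, fderiv_horizSqNorm_apply, Pi.single_apply]

theorem Yder_horizSqNorm (i : Fin N) (η : H N) : Yder i horizSqNorm η = 2 * η.2.1 i := by
  simp [Yder, YVec, fderiv_horizSqNorm_apply, Pi.single_apply]

theorem Xder_hnormQuartic (i : Fin N) :
    Xder i hnormQuartic = fun η => 4 * (horizSqNorm η * η.1 i + η.2.2 * η.2.1 i) := by
  funext η
  have hq : fderiv ℝ horizSqNorm η (XVec i η) = 2 * η.1 i := Xder_horizSqNorm i η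
  rw [Xder, fderiv_hnormQuartic_apply, hq]
  simp only [XVec]
  ring

theorem Yder_hnormQuartic (i : Fin N) :
    Yder i hnormQuartic = fun η => 4 * (horizSqNorm η * η.2.1 i - η.2.2 * η.1 i) := by
  funext η
  have hq : fderiv ℝ horizSqNorm η (YVec i η) = 2 * η.2.1 i := Yder_horizSqNorm i η
  rw [Yder, fderiv_hnormQuartic_apply, hq]
  simp only [YVec]
  ring

theorem Xder_Xder_hnormQuartic (i : Fin N) (η : H N) :
    Xder i (Xder i hnormQuartic) η = 4 * (horizSqNorm η + 2 * η.1 i ^ 2 + 2 * η.2.1 i ^ 2) := by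
  have hq : Differentiable ℝ (horizSqNorm (N := N)) :=
    contDiff_horizSqNorm.differentiable two_ne_zero
  have hXq : fderiv ℝ horizSqNorm η (XVec i η) = 2 * η.1 i := Xder_horizSqNorm i η
  rw [Xder_hnormQuartic, Xder, fderiv_const_mul (by fun_prop)]
  simp (disch := fun_prop) only [fderiv_fun_add, fderiv_fun_mul, smul_apply, add_apply,
    smul_eq_mul, hXq, fderiv_fst_apply, fderiv_snd_fst_apply, fderiv_snd_snd_apply]
  simp only [XVec, Pi.single_eq_same, Pi.zero_apply]
  ring

theorem Yder_Yder_hnormQuartic (i : Fin N) (η : H N) :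
    Yder i (Yder i hnormQuartic) η = 4 * (horizSqNorm η + 2 * η.1 i ^ 2 + 2 * η.2.1 i ^ 2) := by
  have hq : Differentiable ℝ (horizSqNorm (N := N)) :=
    contDiff_horizSqNorm.differentiable two_ne_zero
  have hYq : fderiv ℝ horizSqNorm η (YVec i η) = 2 * η.2.1 i := Yder_horizSqNorm i η
  rw [Yder_hnormQuartic, Yder, fderiv_const_mul (by fun_prop)]
  simp (disch := fun_prop) only [fderiv_fun_sub, fderiv_fun_mul, smul_apply, sub_apply, add_apply,
    smul_eq_mul, hYq, fderiv_fst_apply, fderiv_snd_fst_apply, fderiv_snd_snd_apply]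
  simp only [YVec, Pi.single_eq_same, Pi.zero_apply]
  ring

theorem sum_sq_add_sq_eq_horizSqNorm (η : H N) :
    ∑ i, (η.1 i ^ 2 + η.2.1 i ^ 2) = horizSqNorm η :=
  Finset.sum_add_distrib

theorem hGradSq_hnormQuartic (η : H N) :
    hGradSq hnormQuartic η = 16 * hnormQuartic η * horizSqNorm η := by
  have hrot : ∀ i, Xder i hnormQuartic η ^ 2 + Yder i hnormQuartic η ^ 2 =
      16 * hnormQuartic η * (η.1 i ^ 2 + η.2.1 i ^ 2) := fun i => by
    rw [Xder_hnormQuartic, Yder_hnormQuartic, hnormQuartic]; ring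
  rw [hGradSq, Finset.sum_congr rfl fun i _ => hrot i, ← Finset.mul_sum,
    sum_sq_add_sq_eq_horizSqNorm]

theorem subLap_hnormQuartic (η : H N) :
    subLap hnormQuartic η = 8 * (N + 2) * horizSqNorm η := by
  have hterm : ∀ i, Xder i (Xder i hnormQuartic) η + Yder i (Yder i hnormQuartic) η =
      8 * horizSqNorm η + 16 * (η.1 i ^ 2 + η.2.1 i ^ 2) := fun i => by
    rw [Xder_Xder_hnormQuartic, Yder_Yder_hnormQuartic]; ring
  rw [subLap, Finset.sum_congr rfl fun i _ => hterm i, Finset.sum_add_distrib, ← Finset.mul_sum,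
    ← Finset.mul_sum, sum_sq_add_sq_eq_horizSqNorm, Finset.sum_const, Finset.card_univ,
    Fintype.card_fin, nsmul_eq_mul]
  ring

end HomogeneousNorm

/-- `Δ_H ρ = (Q-1)/ρ · Ψ(η)` with `Q = 2N+2` and `Ψ = (|x|²+|y|²)/ρ²`, for `η ≠ 0`. -/
theorem subLap_hnorm {N : ℕ} (η : H N) (hη : η ≠ 0) :
    subLap hnorm η =
      ((2 * N + 2 : ℝ) - 1) / hnorm η * ((sqnorm η.1 + sqnorm η.2.1) / (hnorm η) ^ 2) := by
  have hu : 0 < hnormQuartic η := hnormQuartic_pos hη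
  have hφ : ∀ᶠ t in 𝓝 (hnormQuartic η),
      HasDerivAt (fun t => t ^ (1/4 : ℝ)) (1/4 * t ^ (1/4 - 1 : ℝ)) t :=
    (eventually_ne_nhds hu.ne').mono fun t ht => Real.hasDerivAt_rpow_const (.inl ht)
  have hφ' : HasDerivAt (fun t => 1/4 * t ^ (1/4 - 1 : ℝ))
      (1/4 * ((1/4 - 1) * hnormQuartic η ^ (1/4 - 1 - 1 : ℝ))) (hnormQuartic η) :=
    (Real.hasDerivAt_rpow_const (.inl hu.ne')).const_mul _
  change subLap ((fun t => t ^ (1/4 : ℝ)) ∘ hnormQuartic) η = _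
  rw [subLap_comp contDiff_hnormQuartic hφ hφ', hGradSq_hnormQuartic, subLap_hnormQuartic]
  change _ = _ / hnormQuartic η ^ (1/4 : ℝ) *
    (horizSqNorm η / (hnormQuartic η ^ (1/4 : ℝ)) ^ 2)
  rw [show (1/4 - 1 - 1 : ℝ) = 1/4 * -(7 : ℕ) by norm_num,
    show (1/4 - 1 : ℝ) = 1/4 * -(3 : ℕ) by norm_num, rpow_mul_neg_natCast hu.le,
    rpow_mul_neg_natCast hu.le]
  have hr : 0 < hnormQuartic η ^ (1/4 : ℝ) := Real.rpow_pos_of_pos hu _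
  have hur : hnormQuartic η = (hnormQuartic η ^ (1/4 : ℝ)) ^ 4 := by
    rw [← Real.rpow_mul_natCast hu.le]; norm_num
  set r := hnormQuartic η ^ (1/4 : ℝ)
  rw [hur]
  field_simp
  ring
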